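/- Let (K, ⟨−,−⟩, s) be an integral Serre lattice of surface type equipped with a codimension filtration (F¹, F²), let z ∈ F²K, and let (K̃, ⟨−,−⟩, s̃) be the numerical blowup of K at z. Then for every o ∈ K one has ⟨(s̃ − 1)o, (s̃ − 1)o⟩ = ⟨(s − 1)o, (s − 1)o⟩ + ⟨o, z⟩². In particular, for the degrees δ(K) := −⟨(s−1)o, (s−1)o⟩ and δ(K̃) := −⟨(s̃−1)o, (s̃−1)o⟩ computed from a structure element o (an element with K = ℤ·o ⊕ F¹K), one has δ(K̃) = δ(K) − ⟨o, z⟩². -/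

import Mathlib

open TensorProduct

variable {K : Type*} [AddCommGroup K]

/-- The blowup bilinear form on `K̃ = ℤ·f ⊕ K` (realized as `ℤ × K`, with `f = (1,0)`):
`⟨f,f⟩ = 1`, `⟨x,f⟩ = 0`, `⟨f,y⟩ = ⟨z,y⟩` for `x, y ∈ K`. -/
def blowupForm (B : K →ₗ[ℤ] K →ₗ[ℤ] ℤ) (z : K) :
    (ℤ × K) →ₗ[ℤ] (ℤ × K) →ₗ[ℤ] ℤ :=
  LinearMap.mk₂ ℤ (fun p q => p.1 * q.1 + p.1 * B z q.2 + B p.2 q.2)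
    (by intro p p' q; simp [add_mul]; ring)
    (by intro c p q; simp [smul_eq_mul]; ring)
    (by intro p q q'; simp [mul_add]; ring)
    (by intro c p q; simp [smul_eq_mul]; ring)

/-- The blowup Serre automorphism on `ℤ × K`: `s̃(f) = f + z`, `s̃(y) = s(y) − ⟨y,z⟩·f`. -/
def blowupAut (B : K →ₗ[ℤ] K →ₗ[ℤ] ℤ) (s : K →ₗ[ℤ] K) (z : K) :
    (ℤ × K) →ₗ[ℤ] (ℤ × K) where
  toFun p := (p.1 - B p.2 z, p.1 • z + s p.2)
  map_add' p q := by
    ext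
    · simp; ring
    · simp only [Prod.fst_add, Prod.snd_add, map_add, LinearMap.add_apply, add_smul,
        Prod.mk_add_mk]
      abel
  map_smul' c p := by
    ext
    · simp [smul_eq_mul]; ring
    · simp only [Prod.smul_fst, Prod.smul_snd, smul_eq_mul, map_smul, smul_add, mul_smul,
        RingHom.id_apply]

/-- An integral Serre lattice is of surface type if the base-changed automorphism
`s_ℚ` on `V := ℚ ⊗ K` is unipotent and `rank(s_ℚ − 1) ≤ 2`. -/
def IsSurfaceType {K : Type*} [AddCommGroup K] (s : K →ₗ[ℤ] K) : Prop :=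
  (LinearMap.baseChange ℚ s - 1) ^ (Module.finrank ℚ (ℚ ⊗[ℤ] K)) = 0 ∧
    Module.finrank ℚ (LinearMap.range (LinearMap.baseChange ℚ s - 1)) ≤ 2

/-- A codimension filtration on an integral Serre lattice of surface type: ℚ-subspaces
`F² ⊆ F¹` of `V = ℚ ⊗ K` with `(s−1)V ⊆ F¹`, `(s−1)F¹ ⊆ F²`, `(s−1)F² = 0`,
`dim F¹ = n − 1`, `dim F² = 1` and `⟨F¹, F²⟩ = 0`. -/
def IsCodimFiltration {K : Type*} [AddCommGroup K] (B : K →ₗ[ℤ] K →ₗ[ℤ] ℤ)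
    (s : K →ₗ[ℤ] K) (F1 F2 : Submodule ℚ (ℚ ⊗[ℤ] K)) : Prop :=
  F2 ≤ F1 ∧
    LinearMap.range (LinearMap.baseChange ℚ s - 1) ≤ F1 ∧
    Submodule.map (LinearMap.baseChange ℚ s - 1) F1 ≤ F2 ∧
    Submodule.map (LinearMap.baseChange ℚ s - 1) F2 = ⊥ ∧
    Module.finrank ℚ F1 = Module.finrank ℚ (ℚ ⊗[ℤ] K) - 1 ∧
    Module.finrank ℚ F2 = 1 ∧
    ∀ v ∈ F1, ∀ w ∈ F2, LinearMap.BilinForm.baseChange ℚ B v w = 0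

/-! Since `(s - 1)F² = 0`, the vector `s z - z` dies in `ℚ ⊗ K`, so it is torsion and pairs to zero
with everything: `z` is numerically fixed by `s`. The Serre relation then gives
`⟨z, s o⟩ = ⟨o, z⟩ = ⟨o, s z⟩ = ⟨z, o⟩`, i.e. `⟨z, (s - 1)o⟩ = 0`. Writing
`(s̃ - 1)o = -⟨o, z⟩ f + (s - 1)o`, this kills the cross term `-⟨o, z⟩⟨z, (s - 1)o⟩` and leaves
`⟨f, f⟩⟨o, z⟩² = ⟨o, z⟩²`. -/

theorem LinearMap.apply_eq_zero_of_one_tmul_eq_zero {R A M N : Type*} [CommRing R] [IsDomain R]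
    [CommRing A] [Algebra R A] [IsFractionRing R A] [AddCommGroup M] [Module R M]
    [AddCommGroup N] [Module R N] (B : M →ₗ[R] N →ₗ[R] R) (m : M) {t : N}
    (ht : (1 : A) ⊗ₜ[R] t = 0) : B m t = 0 := by
  obtain ⟨c, hc⟩ :=
    (IsLocalizedModule.eq_zero_iff (nonZeroDivisors R) (TensorProduct.mk R A N 1)).mp ht
  have hct : (c : R) * B m t = 0 := by
    rw [← smul_eq_mul, ← map_smul, ← Submonoid.smul_def, hc, map_zero]
  exact (mul_eq_zero.mp hct).resolve_left (nonZeroDivisors.coe_ne_zero c)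

theorem one_tmul_sub_eq_zero_of_mem_ker (s : K →ₗ[ℤ] K)
    {F : Submodule ℚ (ℚ ⊗[ℤ] K)} (hF : Submodule.map (LinearMap.baseChange ℚ s - 1) F = ⊥)
    {z : K} (hz : (1 : ℚ) ⊗ₜ[ℤ] z ∈ F) : (1 : ℚ) ⊗ₜ[ℤ] (s z - z) = 0 := by
  have hmem := Submodule.mem_map_of_mem (f := LinearMap.baseChange ℚ s - 1) hz
  rwa [hF, Submodule.mem_bot, LinearMap.sub_apply, LinearMap.baseChange_tmul,
    Module.End.one_apply, ← TensorProduct.tmul_sub] at hmem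

theorem serre_apply_sub_eq_zero {R M : Type*} [CommRing R] [AddCommGroup M] [Module R M]
    {B : M →ₗ[R] M →ₗ[R] R} {s : M →ₗ[R] M} (hserre : ∀ v w, B v (s w) = B w v) {z : M}
    (hz : ∀ o, B o (s z) = B o z) (o : M) : B z (s o - o) = 0 := by
  rw [map_sub, hserre, ← hz, hserre, sub_self]

section Blowup

variable (B : K →ₗ[ℤ] K →ₗ[ℤ] ℤ) (s : K →ₗ[ℤ] K) (z : K)

theorem blowupForm_apply (p q : ℤ × K) :
    blowupForm B z p q = p.1 * q.1 + p.1 * B z q.2 + B p.2 q.2 :=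
  rfl

theorem blowupAut_sub_self_apply (o : K) :
    blowupAut B s z (0, o) - (0, o) = (-B o z, s o - o) := by
  simp [blowupAut]

theorem blowupForm_blowupAut_sub_self {o : K} (ho : B z (s o - o) = 0) :
    blowupForm B z (blowupAut B s z (0, o) - (0, o)) (blowupAut B s z (0, o) - (0, o)) =
      B (s o - o) (s o - o) + B o z ^ 2 := by
  rw [blowupAut_sub_self_apply, blowupForm_apply, ho]
  ring

end Blowup

theorem blowup_degree_general (K : Type*) [AddCommGroup K]
    (B : K →ₗ[ℤ] K →ₗ[ℤ] ℤ)
    (s : K →ₗ[ℤ] K)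
    (hserre : ∀ v w, B v (s w) = B w v)
    (F1 F2 : Submodule ℚ (ℚ ⊗[ℤ] K)) (hfil : IsCodimFiltration B s F1 F2)
    (z : K) (hz : (1 : ℚ) ⊗ₜ[ℤ] z ∈ F2) :
    (∀ o : K,
        blowupForm B z (blowupAut B s z (0, o) - (0, o)) (blowupAut B s z (0, o) - (0, o)) =
          B (s o - o) (s o - o) + (B o z) ^ 2) ∧
      ∀ o : K,
        IsCompl (Submodule.span ℤ {o})
          (Submodule.comap ((TensorProduct.mk ℤ ℚ K) 1) (F1.restrictScalars ℤ)) →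
        -(blowupForm B z (blowupAut B s z (0, o) - (0, o)) (blowupAut B s z (0, o) - (0, o))) =
          -(B (s o - o) (s o - o)) - (B o z) ^ 2 := by
  have hsz : (1 : ℚ) ⊗ₜ[ℤ] (s z - z) = 0 := one_tmul_sub_eq_zero_of_mem_ker s hfil.2.2.2.1 hz
  have hfix : ∀ o, B o (s z) = B o z := fun o => by
    rw [← sub_eq_zero, ← map_sub]
    exact B.apply_eq_zero_of_one_tmul_eq_zero (A := ℚ) o hsz
  have main := fun o =>
    blowupForm_blowupAut_sub_self B s z (serre_apply_sub_eq_zero hserre hfix o)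
  exact ⟨main, fun o _ => by rw [main o]; ring⟩

/-- in the numerical blowup `K̃` of `K` at `z ∈ F²K` one has
`⟨(s̃−1)o, (s̃−1)o⟩ = ⟨(s−1)o, (s−1)o⟩ + ⟨o,z⟩²` for every `o ∈ K`; in particular, for a
structure element `o` the degrees satisfy `δ(K̃) = δ(K) − ⟨o,z⟩²`. -/
theorem blowup_degree (K : Type*) [AddCommGroup K]
    [Module.Free ℤ K] [Module.Finite ℤ K]
    (B : K →ₗ[ℤ] K →ₗ[ℤ] ℤ) (hB : ∀ v, (∀ w, B v w = 0) → v = 0)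
    (s : K →ₗ[ℤ] K) (hbij : Function.Bijective s)
    (hserre : ∀ v w, B v (s w) = B w v)
    (hsurf : IsSurfaceType s)
    (F1 F2 : Submodule ℚ (ℚ ⊗[ℤ] K)) (hfil : IsCodimFiltration B s F1 F2)
    (z : K) (hz : (1 : ℚ) ⊗ₜ[ℤ] z ∈ F2) :
    (∀ o : K,
        blowupForm B z (blowupAut B s z (0, o) - (0, o)) (blowupAut B s z (0, o) - (0, o)) =
          B (s o - o) (s o - o) + (B o z) ^ 2) ∧
      ∀ o : K,
        IsCompl (Submodule.span ℤ {o})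
          (Submodule.comap ((TensorProduct.mk ℤ ℚ K) 1) (F1.restrictScalars ℤ)) →
        -(blowupForm B z (blowupAut B s z (0, o) - (0, o)) (blowupAut B s z (0, o) - (0, o))) =
          -(B (s o - o) (s o - o)) - (B o z) ^ 2 :=
  blowup_degree_general K B s hserre F1 F2 hfil z hz
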